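/- arXiv:1909.00543 — 3 statements merged into one kernel-verified Lean document; each statement's English description precedes it below -/
import Mathlib

section
/- For any (ε,δ)-differentially private mechanism M mapping {0,1} to {0,1}, the quantity (Pr[M(1)=1] + Pr[M(0)=0])/2 is at most 1 - (1-δ)/(e^ε + 1). -/
/-! Each correct answer is bounded through the other input's error, whose probability is one minus
that input's correct answer: `Pr[M(1)=1] ≤ e^ε (1 - Pr[M(0)=0]) + δ` and symmetrically. Adding the
two bounds gives `(1 + e^ε) (Pr[M(1)=1] + Pr[M(0)=0]) ≤ 2 (e^ε + δ)`. -/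

lemma add_div_two_le_of_le_mul_one_sub_add {a b c δ : ℝ} (hc : 0 < c + 1)
    (ha : a ≤ c * (1 - b) + δ) (hb : b ≤ c * (1 - a) + δ) :
    (a + b) / 2 ≤ 1 - (1 - δ) / (c + 1) :=
  calc (a + b) / 2 ≤ (c + δ) / (c + 1) := by rw [le_div_iff₀ hc]; linarith
    _ = 1 - (1 - δ) / (c + 1) := by field_simp; ring

theorem dp_auc_bound_general (ε δ : ℝ)
    (p : Bool → Bool → ℝ)
    (hsum : ∀ x, p x true + p x false = 1)
    (hDP : ∀ z x x', x ≠ x' → p x z ≤ Real.exp ε * p x' z + δ) :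
    (p true true + p false false) / 2 ≤ 1 - (1 - δ) / (Real.exp ε + 1) := by
  have hone : p true true ≤ Real.exp ε * (1 - p false false) + δ := by
    simpa only [← eq_sub_of_add_eq (hsum false)] using hDP true true false (by decide)
  have hzero : p false false ≤ Real.exp ε * (1 - p true true) + δ := by
    simpa only [← eq_sub_of_add_eq' (hsum true)] using hDP false false true (by decide)
  exact add_div_two_le_of_le_mul_one_sub_add (by positivity) hone hzero

/-- For any (ε,δ)-DP mechanism `M : {0,1} → {0,1}` (given by its transition
probabilities `p x z = Pr[M(x) = z]`), the quantity
`(Pr[M(1)=1] + Pr[M(0)=0]) / 2` is at most `1 - (1-δ)/(e^ε + 1)`. -/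
theorem dp_auc_bound (ε δ : ℝ) (hε : 0 ≤ ε) (hδ0 : 0 ≤ δ) (hδ1 : δ ≤ 1)
    (p : Bool → Bool → ℝ)
    (hnn : ∀ x z, 0 ≤ p x z)
    (hsum : ∀ x, p x true + p x false = 1)
    (hDP : ∀ z x x', x ≠ x' → p x z ≤ Real.exp ε * p x' z + δ) :
    (p true true + p false false) / 2 ≤ 1 - (1 - δ) / (Real.exp ε + 1) :=
  dp_auc_bound_general ε δ p hsum hDP
end

section
/- In the DAG activation recursion, for a fixed target node t and fixed node v, the map α_v ↦ x_t is affine (linear plus constant) when all other α_u (u ≠ v) are held fixed; its slope equals (∂x_t/∂x_v)·(1 − Σ_{u ∈ N_in(v)} w(u,v)·x_u), where ∂x_t/∂x_v satisfies the backward recursion ∂x_t/∂x_v = Σ_{u ∈ N_out(v)} w(v,u)·(1 − α_u)·(∂x_t/∂x_u) with base case ∂x_t/∂x_t = 1. -/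
/-!
Write `δ = x(β) − x(α)` for the change caused by moving the seed at `v` to `s`, and let `J` be
the Jacobian of one step of the recursion, `J u u' = ∂x_{u'}/∂x_u = w(u,u')(1 − α_{u'})`.
Nodes upstream of `v` do not move, so `δ` solves the forward linear system
`δ (1 − J) = Δ · e_v` with `Δ = (1 − Σ_u w(u,v) x_u)(s − α_v)`, while the backward recursion
says `(1 − J) d = e_t` (`d` vanishes downstream of `t`). Pairing the two systems gives
`δ_t = δ · (1 − J) d = Δ · d_v`.
-/

open Matrix Finset

section

variable {V : Type*}

/-- Entry `(u, u')` is `∂x_{u'}/∂x_u` for the activation recursion at seed vector `α`. -/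
def activationJacobian (w : V → V → ℝ) (α : V → ℝ) : Matrix V V ℝ :=
  Matrix.of fun u u' => w u u' * (1 - α u')

theorem rank_lt_of_activationJacobian_ne_zero {w : V → V → ℝ} {r : V → ℕ}
    (hacyc : ∀ u v, w u v ≠ 0 → r u < r v) (α : V → ℝ) :
    ∀ u v, activationJacobian w α u v ≠ 0 → r u < r v :=
  fun u v h => hacyc u v (left_ne_zero_of_mul h)

variable [Fintype V]

theorem eq_zero_of_rank_lt_of_eq_mulVec {A : Matrix V V ℝ} {r : V → ℕ}
    (hA : ∀ u v, A u v ≠ 0 → r u < r v) {d : V → ℝ} {t : V}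
    (hd : ∀ u, u ≠ t → d u = (A *ᵥ d) u) (u : V) (htu : r t < r u) : d u = 0 := by
  induction u using (measure fun u => univ.sup r - r u).wf.induction with
  | _ u ih =>
  rw [hd u (by rintro rfl; omega)]
  refine sum_eq_zero fun u' _ => show A u u' * d u' = 0 from ?_
  by_cases h : A u u' = 0
  · rw [h, zero_mul]
  · have huu' := hA u u' h
    have hu' : r u' ≤ univ.sup r := le_sup (mem_univ u')
    rw [ih u' (show univ.sup r - r u' < univ.sup r - r u by omega) (by omega), mul_zero]

theorem one_sub_mulVec_eq_single [DecidableEq V] {A : Matrix V V ℝ} {r : V → ℕ}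
    (hA : ∀ u v, A u v ≠ 0 → r u < r v) {d : V → ℝ} {t : V} (hdt : d t = 1)
    (hd : ∀ u, u ≠ t → d u = (A *ᵥ d) u) : (1 - A) *ᵥ d = Pi.single t 1 := by
  ext u
  rw [sub_mulVec, one_mulVec, Pi.sub_apply]
  by_cases hut : u = t
  · subst hut
    have hzero : (A *ᵥ d) u = 0 := sum_eq_zero fun u' _ => show A u u' * d u' = 0 by
      by_cases h : A u u' = 0
      · rw [h, zero_mul]
      · rw [eq_zero_of_rank_lt_of_eq_mulVec hA hd u' (hA u u' h), mul_zero]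
    rw [hzero, hdt, Pi.single_eq_same, sub_zero]
  · rw [← hd u hut, sub_self, Pi.single_eq_of_ne hut]

theorem activation_eq_of_eq_on_rank_le {w : V → V → ℝ} {r : V → ℕ} {X : (V → ℝ) → V → ℝ}
    (hacyc : ∀ u v, w u v ≠ 0 → r u < r v)
    (hX : ∀ (β : V → ℝ) (v : V), X β v = β v + (1 - β v) * ∑ u, w u v * X β u)
    {α β : V → ℝ} (u : V)
    (h : ∀ u', r u' ≤ r u → β u' = α u') : X β u = X α u := by
  induction u using (measure r).wf.induction with
  | _ u ih =>
  rw [hX β u, hX α u, h u le_rfl]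
  congr 2
  refine sum_congr rfl fun u' _ => ?_
  by_cases hw : w u' u = 0
  · rw [hw, zero_mul, zero_mul]
  · have hu' := hacyc u' u hw
    rw [ih u' hu' fun u'' hu'' => h u'' (by omega)]

theorem activation_update_sub_vecMul_eq_single [DecidableEq V] {w : V → V → ℝ} {r : V → ℕ}
    {X : (V → ℝ) → V → ℝ} (hacyc : ∀ u v, w u v ≠ 0 → r u < r v)
    (hX : ∀ (β : V → ℝ) (v : V), X β v = β v + (1 - β v) * ∑ u, w u v * X β u)
    (α : V → ℝ) (v : V) (s : ℝ) :
    (X (Function.update α v s) - X α) ᵥ* (1 - activationJacobian w α) =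
      Pi.single v ((1 - ∑ u, w u v * X α u) * (s - α v)) := by
  ext u
  rw [vecMul_sub, vecMul_one, Pi.sub_apply]
  simp only [vecMul, dotProduct, activationJacobian, of_apply, Pi.sub_apply]
  have hsum : ∑ u', (X (Function.update α v s) u' - X α u') * (w u' u * (1 - α u)) =
      (1 - α u) * (∑ u', w u' u * X (Function.update α v s) u' - ∑ u', w u' u * X α u') := by
    rw [← sum_sub_distrib, mul_sum]
    exact sum_congr rfl fun _ _ => by ring
  rw [hsum, hX (Function.update α v s) u, hX α u]
  by_cases huv : u = v
  · subst huv
    have hup : ∀ u', w u' u * X (Function.update α u s) u' = w u' u * X α u' := fun u' => by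
      by_cases hw : w u' u = 0
      · rw [hw, zero_mul, zero_mul]
      · have hu' := hacyc u' u hw
        rw [activation_eq_of_eq_on_rank_le hacyc hX u' fun u'' hu'' =>
          Function.update_of_ne (by rintro rfl; omega) s α]
    rw [sum_congr rfl fun u' _ => hup u', Function.update_self, Pi.single_eq_same]
    ring
  · rw [Function.update_of_ne huv, Pi.single_eq_of_ne huv]
    ring

end

theorem dag_activation_affine_in_seed_general
    {V : Type*} [Fintype V] [DecidableEq V] (w : V → V → ℝ) (r : V → ℕ)
    (hacyc : ∀ u v, w u v ≠ 0 → r u < r v)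
    (X : (V → ℝ) → V → ℝ)
    (hX : ∀ (β : V → ℝ) (v : V),
      X β v = β v + (1 - β v) * ∑ u, w u v * X β u)
    (α : V → ℝ)
    (t v : V) (d : V → ℝ)
    (hdt : d t = 1)
    (hd : ∀ v' : V, v' ≠ t → d v' = ∑ u, w v' u * (1 - α u) * d u) :
    ∀ s : ℝ,
      X (Function.update α v s) t =
        X α t + d v * (1 - ∑ u, w u v * X α u) * (s - α v) := by
  intro s
  have hdual := dotProduct_mulVec (X (Function.update α v s) - X α) (1 - activationJacobian w α) d
  rw [activation_update_sub_vecMul_eq_single hacyc hX, one_sub_mulVec_eq_single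
    (rank_lt_of_activationJacobian_ne_zero hacyc α) hdt hd, dotProduct_single, single_dotProduct] at hdual
  simp only [Pi.sub_apply, mul_one] at hdual
  linarith

/-- Affine dependence of `x t` on a single seed probability `α v`.  Let
`X : (V → ℝ) → V → ℝ` solve the activation recursion for every seed vector.
If `d : V → ℝ` satisfies the backward recursion `d t = 1` and
`d v' = Σ_u w v' u · (1 − α u) · d u` for `v' ≠ t`, then for every new value
`s` of the seed at `v`,
`X (update α v s) t = X α t + d v · (1 − Σ_u w u v · X α u) · (s − α v)`;
i.e. `α_v ↦ x_t` is affine with slope `(∂x_t/∂x_v)·(1 − Σ_u w u v · x_u)`. -/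
theorem dag_activation_affine_in_seed
    {V : Type*} [Fintype V] [DecidableEq V] (w : V → V → ℝ) (r : V → ℕ)
    (hacyc : ∀ u v, w u v ≠ 0 → r u < r v)
    (hw0 : ∀ u v, 0 ≤ w u v) (hw1 : ∀ u v, w u v ≤ 1)
    (hin : ∀ v, ∑ u, w u v ≤ 1)
    (X : (V → ℝ) → V → ℝ)
    (hX : ∀ (β : V → ℝ) (v : V),
      X β v = β v + (1 - β v) * ∑ u, w u v * X β u)
    (α : V → ℝ) (hα0 : ∀ v, 0 ≤ α v) (hα1 : ∀ v, α v ≤ 1)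
    (t v : V) (d : V → ℝ)
    (hdt : d t = 1)
    (hd : ∀ v' : V, v' ≠ t → d v' = ∑ u, w v' u * (1 - α u) * d u) :
    ∀ s : ℝ,
      X (Function.update α v s) t =
        X α t + d v * (1 - ∑ u, w u v * X α u) * (s - α v) :=
  dag_activation_affine_in_seed_general w r hacyc X hX α t v d hdt hd
end

section
/- Let R₁ and R₀ be independent random scores, where R₁ is drawn by first sampling z = M(1) and then a score s ~ S_z, and R₀ by sampling z' = M(0) and s' ~ S_{z'}, for arbitrary score distributions S_0, S_1 on the reals. Then Pr[s > s'] + (1/2)·Pr[s = s'] = (p11·p00 − p01·p10)·(γ(1,0) − γ(0,1))/2 + 1/2, where γ(a,b) = Pr[s > s' | s ~ S_a, s' ~ S_b], pxz = Pr[M(x)=z]. -/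
/-!
By trichotomy, a pair of reports `(z, z')` contributes
`Pr[s > s'] + ½ Pr[s = s'] = ½ + ½ (γ(z,z') - γ(z',z))`. The diagonal pairs contribute
exactly `½`, and the weights `p1z · p0z'` sum to `1`, so only the antisymmetric part
`(p11 p00 - p10 p01) (γ(1,0) - γ(0,1)) / 2` survives.
-/

open MeasureTheory

section ScoreComparison

variable {α : Type*} [LinearOrder α] [TopologicalSpace α] [OrderClosedTopology α]
  [SecondCountableTopology α] [MeasurableSpace α] [OpensMeasurableSpace α]

lemma measureReal_gt_add_lt_add_eq (ρ : Measure (α × α)) [IsProbabilityMeasure ρ] :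
    ρ.real {q | q.2 < q.1} + ρ.real {q | q.1 < q.2} + ρ.real {q | q.1 = q.2} = 1 := by
  have hgt : MeasurableSet {q : α × α | q.2 < q.1} :=
    measurableSet_lt measurable_snd measurable_fst
  have hlt : MeasurableSet {q : α × α | q.1 < q.2} :=
    measurableSet_lt measurable_fst measurable_snd
  have hdisj : Disjoint {q : α × α | q.2 < q.1} {q | q.1 < q.2} :=
    Set.disjoint_left.mpr fun _ h₁ h₂ => lt_asymm h₁ h₂
  have heq : {q : α × α | q.1 = q.2} = ({q | q.2 < q.1} ∪ {q | q.1 < q.2})ᶜ := by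
    ext q
    simp [le_antisymm_iff]
  rw [heq, ← measureReal_union hdisj hlt, measureReal_add_measureReal_compl (hgt.union hlt),
    probReal_univ]

lemma prod_swap_apply_setOf_lt (μ ν : Measure α) [SFinite μ] [SFinite ν] :
    (ν.prod μ) {q | q.2 < q.1} = (μ.prod ν) {q | q.1 < q.2} := by
  rw [← Measure.prod_swap, Measure.map_apply measurable_swap
    (measurableSet_lt measurable_snd measurable_fst)]
  rfl

lemma prod_real_gt_add_swap_gt_add_eq (μ ν : Measure α) [IsProbabilityMeasure μ]
    [IsProbabilityMeasure ν] :
    (μ.prod ν).real {q | q.2 < q.1} + (ν.prod μ).real {q | q.2 < q.1} +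
      (μ.prod ν).real {q | q.1 = q.2} = 1 := by
  rw [measureReal_def (ν.prod μ), prod_swap_apply_setOf_lt, ← measureReal_def]
  exact measureReal_gt_add_lt_add_eq _

end ScoreComparison

theorem auc_scoring_formula_general
    (p : Bool → Bool → ℝ)
    (hsum : ∀ x, p x true + p x false = 1)
    (μ : Bool → Measure ℝ) (hP : ∀ b, IsProbabilityMeasure (μ b)) :
    (∑ z : Bool, ∑ z' : Bool, p true z * p false z' *
        (((μ z).prod (μ z')) {q : ℝ × ℝ | q.2 < q.1}).toReal) +
      (1 / 2) * (∑ z : Bool, ∑ z' : Bool, p true z * p false z' *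
        (((μ z).prod (μ z')) {q : ℝ × ℝ | q.1 = q.2}).toReal) =
    (p true true * p false false - p false true * p true false) *
        ((((μ true).prod (μ false)) {q : ℝ × ℝ | q.2 < q.1}).toReal -
          (((μ false).prod (μ true)) {q : ℝ × ℝ | q.2 < q.1}).toReal) / 2
      + 1 / 2 := by
  have trichotomy (a b : Bool) :=
    haveI := hP a; haveI := hP b; prod_real_gt_add_swap_gt_add_eq (μ a) (μ b)
  simp only [Fintype.sum_bool, ← measureReal_def]
  linear_combination (p true true * p false true / 2) * trichotomy true true +
    (p true false * p false false / 2) * trichotomy false false +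
    (p true true * p false false / 2) * trichotomy true false +
    (p true false * p false true / 2) * trichotomy false true +
    ((p false true + p false false) / 2) * hsum true + (1 / 2) * hsum false

/-- AUC of a scoring classifier: a positive sample's score is drawn from
`S (M 1)` and a negative sample's from `S (M 0)`, where `S b = μ b` is the
score distribution for observed report `b` and `p x z = Pr[M(x)=z]`.  Then
`Pr[s > s'] + ½·Pr[s = s']`
`= (p11·p00 − p01·p10)·(γ(1,0) − γ(0,1))/2 + 1/2`,
where `γ(a,b)` is the probability that a sample from `μ a` strictly exceeds an
independent sample from `μ b`. -/
theorem auc_scoring_formula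
    (p : Bool → Bool → ℝ)
    (hnn : ∀ x z, 0 ≤ p x z)
    (hsum : ∀ x, p x true + p x false = 1)
    (μ : Bool → Measure ℝ) (hP : ∀ b, IsProbabilityMeasure (μ b)) :
    (∑ z : Bool, ∑ z' : Bool, p true z * p false z' *
        (((μ z).prod (μ z')) {q : ℝ × ℝ | q.2 < q.1}).toReal) +
      (1 / 2) * (∑ z : Bool, ∑ z' : Bool, p true z * p false z' *
        (((μ z).prod (μ z')) {q : ℝ × ℝ | q.1 = q.2}).toReal) =
    (p true true * p false false - p false true * p true false) *
        ((((μ true).prod (μ false)) {q : ℝ × ℝ | q.2 < q.1}).toReal -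
          (((μ false).prod (μ true)) {q : ℝ × ℝ | q.2 < q.1}).toReal) / 2
      + 1 / 2 :=
  auc_scoring_formula_general p hsum μ hP
end
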